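/- Let U be a set, (Ω, <) a linearly ordered set, I a set, ℓ : I → U, and r : I → Ω, and let ≺ be the relation on I defined by i ≺ j iff r(i) < r(j), so that ⟨I, ℓ, ≺⟩ is a ranked preferential structure over U. Then its minimization function μ, defined on all subsets of U, satisfies (μ⊆), (μPR), (μ=), (μ='), (μ‖), (μ∪), (μ∪'), (μ∈), and (μRatM). -/

import Mathlib

/-!
In a ranked structure, `μ X` is the set of labels of those copies over `X` whose rank is
least among all copies over `X`. If a least copy over `Y` lies over `X ⊆ Y`, then `X` and `Y`
have the same least rank, which is (μ=); and the least rank over `X ∪ Y` is the smaller of the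
least ranks over `X` and over `Y`, so `μ (X ∪ Y)` is nonempty as soon as `μ X` and `μ Y` are.
Everything except (μ∈) follows formally from these two facts and (μ⊆).
-/

/-- The minimization function of a preferential structure ⟨I, ℓ, ≺⟩ over U. -/
def prefMu {I U : Type*} (ℓ : I → U) (prec : I → I → Prop) (X : Set U) : Set U :=
  {x ∈ X | ∃ i : I, ℓ i = x ∧ ¬ ∃ j : I, ℓ j ∈ X ∧ prec j i}

section ChoiceFunction

variable {U : Type*} {μ : Set U → Set U} {X Y Z : Set U}

theorem mu_eq_of_mu_subset (heq : ∀ X Y, X ⊆ Y → (X ∩ μ Y).Nonempty → μ X = μ Y ∩ X)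
    (hXZ : X ⊆ Z) (hZX : μ Z ⊆ X) (hne : (μ Z).Nonempty) : μ X = μ Z := by
  obtain ⟨z, hz⟩ := hne
  rw [heq X Z hXZ ⟨z, hZX hz, hz⟩, Set.inter_eq_left.2 hZX]

theorem mu_inter_eq (hsub : ∀ X, μ X ⊆ X)
    (heq : ∀ X Y, X ⊆ Y → (X ∩ μ Y).Nonempty → μ X = μ Y ∩ X)
    (h : (μ Y ∩ X).Nonempty) : μ (Y ∩ X) = μ Y ∩ X := by
  obtain ⟨a, haY, haX⟩ := h
  rw [heq (Y ∩ X) Y Set.inter_subset_left ⟨a, ⟨hsub Y haY, haX⟩, haY⟩, ← Set.inter_assoc,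
    Set.inter_eq_left.2 (hsub Y)]

theorem mu_eq_empty_of_mu_union_eq_empty
    (hunion : ∀ X Y, (μ X).Nonempty → (μ Y).Nonempty → (μ (X ∪ Y)).Nonempty)
    (he : μ (X ∪ Y) = ∅) (hY : (μ Y).Nonempty) : μ X = ∅ := by
  by_contra hX
  exact (hunion X Y (Set.nonempty_iff_ne_empty.2 hX) hY).ne_empty he

theorem mu_union_inter_eq_empty (heq : ∀ X Y, X ⊆ Y → (X ∩ μ Y).Nonempty → μ X = μ Y ∩ X)
    (h : (μ Y ∩ (X \ μ X)).Nonempty) : μ (X ∪ Y) ∩ Y = ∅ := by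
  obtain ⟨a, haY, haX, haX'⟩ := h
  by_contra hne
  have hμY : μ Y = μ (X ∪ Y) ∩ Y :=
    heq Y _ Set.subset_union_right (Set.inter_comm _ _ ▸ Set.nonempty_iff_ne_empty.2 hne)
  have haXY : a ∈ μ (X ∪ Y) := (hμY ▸ haY).1
  exact haX' (heq X _ Set.subset_union_left ⟨a, haX, haXY⟩ ▸ ⟨haXY, haX⟩)

theorem mu_union_eq_left (hsub : ∀ X, μ X ⊆ X)
    (heq : ∀ X Y, X ⊆ Y → (X ∩ μ Y).Nonempty → μ X = μ Y ∩ X)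
    (hunion : ∀ X Y, (μ X).Nonempty → (μ Y).Nonempty → (μ (X ∪ Y)).Nonempty)
    (h : (μ Y ∩ (X \ μ X)).Nonempty) : μ (X ∪ Y) = μ X := by
  have hdisj : Disjoint (μ (X ∪ Y)) Y :=
    Set.disjoint_iff_inter_eq_empty.2 (mu_union_inter_eq_empty heq h)
  rcases (μ (X ∪ Y)).eq_empty_or_nonempty with he | hne
  · rw [he, mu_eq_empty_of_mu_union_eq_empty hunion he (h.mono Set.inter_subset_left)]
  · exact (mu_eq_of_mu_subset heq Set.subset_union_left
      (hdisj.subset_left_of_subset_union (hsub _)) hne).symm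

theorem mu_union_trichotomy (hsub : ∀ X, μ X ⊆ X)
    (heq : ∀ X Y, X ⊆ Y → (X ∩ μ Y).Nonempty → μ X = μ Y ∩ X)
    (hunion : ∀ X Y, (μ X).Nonempty → (μ Y).Nonempty → (μ (X ∪ Y)).Nonempty) (X Y : Set U) :
    μ (X ∪ Y) = μ X ∨ μ (X ∪ Y) = μ Y ∨ μ (X ∪ Y) = μ X ∪ μ Y := by
  rcases (μ (X ∪ Y)).eq_empty_or_nonempty with he | hne
  · rcases (μ Y).eq_empty_or_nonempty with hY | hY
    · exact Or.inr (Or.inl (he.trans hY.symm))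
    · exact Or.inl (he.trans (mu_eq_empty_of_mu_union_eq_empty hunion he hY).symm)
  by_cases hX : Disjoint (μ (X ∪ Y)) X
  · refine Or.inr (Or.inl (mu_eq_of_mu_subset heq Set.subset_union_right ?_ hne).symm)
    exact hX.subset_left_of_subset_union (Set.union_comm X Y ▸ hsub _)
  by_cases hY : Disjoint (μ (X ∪ Y)) Y
  · exact Or.inl (mu_eq_of_mu_subset heq Set.subset_union_left
      (hY.subset_left_of_subset_union (hsub _)) hne).symm
  rw [Set.not_disjoint_iff_nonempty_inter, Set.inter_comm] at hX hY
  refine Or.inr (Or.inr ?_)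
  rw [heq X _ Set.subset_union_left hX, heq Y _ Set.subset_union_right hY,
    ← Set.inter_union_distrib_left, Set.inter_eq_left.2 (hsub _)]

end ChoiceFunction

section Preferential

variable {I U : Type*} {ℓ : I → U} {prec : I → I → Prop} {X Y : Set U}

theorem prefMu_subset : prefMu ℓ prec X ⊆ X := fun _ hx => hx.1

theorem prefMu_inter_subset (hXY : X ⊆ Y) : prefMu ℓ prec Y ∩ X ⊆ prefMu ℓ prec X :=
  fun _ ⟨⟨_, i, hi, hmin⟩, hxX⟩ => ⟨hxX, i, hi, fun ⟨j, hjX, hji⟩ => hmin ⟨j, hXY hjX, hji⟩⟩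

end Preferential

section Ranked

variable {I U Ω : Type*} [LinearOrder Ω] {ℓ : I → U} {r : I → Ω} {X Y : Set U}

def IsMinCopy (ℓ : I → U) (r : I → Ω) (X : Set U) (i : I) : Prop :=
  ℓ i ∈ X ∧ ∀ j, ℓ j ∈ X → r i ≤ r j

theorem mem_prefMu_rank_iff {x : U} :
    x ∈ prefMu ℓ (fun i j => r i < r j) X ↔ ∃ i, ℓ i = x ∧ IsMinCopy ℓ r X i := by
  constructor
  · rintro ⟨hx, i, rfl, hi⟩
    exact ⟨i, rfl, hx, fun j hj => not_lt.1 fun hji => hi ⟨j, hj, hji⟩⟩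
  · rintro ⟨i, rfl, hiX, hi⟩
    exact ⟨hiX, i, rfl, fun ⟨j, hj, hji⟩ => (hi j hj).not_gt hji⟩

theorem prefMu_rank_eq_image :
    prefMu ℓ (fun i j => r i < r j) X = ℓ '' {i | IsMinCopy ℓ r X i} := by
  ext x
  rw [mem_prefMu_rank_iff, Set.mem_image]
  simp only [Set.mem_ofPred_eq, and_comm]

theorem IsMinCopy.of_subset {i : I} (hXY : X ⊆ Y) (hi : IsMinCopy ℓ r Y i) (hiX : ℓ i ∈ X) :
    IsMinCopy ℓ r X i :=
  ⟨hiX, fun j hj => hi.2 j (hXY hj)⟩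

theorem IsMinCopy.of_superset {i j : I} (hXY : X ⊆ Y) (hj : IsMinCopy ℓ r X j)
    (hi : IsMinCopy ℓ r Y i) (hiX : ℓ i ∈ X) : IsMinCopy ℓ r Y j :=
  ⟨hXY hj.1, fun k hk => (hj.2 i hiX).trans (hi.2 k hk)⟩

theorem IsMinCopy.union {i k : I} (hi : IsMinCopy ℓ r X i) (hk : IsMinCopy ℓ r Y k)
    (hik : r i ≤ r k) : IsMinCopy ℓ r (X ∪ Y) i :=
  ⟨Or.inl hi.1, fun j hj => hj.elim (hi.2 j) fun hjY => hik.trans (hk.2 j hjY)⟩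

theorem prefMu_rank_eq_inter (hXY : X ⊆ Y)
    (h : (X ∩ prefMu ℓ (fun i j => r i < r j) Y).Nonempty) :
    prefMu ℓ (fun i j => r i < r j) X = prefMu ℓ (fun i j => r i < r j) Y ∩ X := by
  obtain ⟨_, hxX, hxY⟩ := h
  obtain ⟨i, rfl, hi⟩ := mem_prefMu_rank_iff.1 hxY
  have hcopies : {j | IsMinCopy ℓ r X j} = {j | IsMinCopy ℓ r Y j} ∩ ℓ ⁻¹' X := by
    ext j
    exact ⟨fun hj => ⟨hj.of_superset hXY hi hxX, hj.1⟩, fun ⟨hj, hjX⟩ => hj.of_subset hXY hjX⟩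
  rw [prefMu_rank_eq_image, prefMu_rank_eq_image, hcopies, Set.image_inter_preimage]

theorem prefMu_rank_union_nonempty (hX : (prefMu ℓ (fun i j => r i < r j) X).Nonempty)
    (hY : (prefMu ℓ (fun i j => r i < r j) Y).Nonempty) :
    (prefMu ℓ (fun i j => r i < r j) (X ∪ Y)).Nonempty := by
  obtain ⟨i, -, hi⟩ := mem_prefMu_rank_iff.1 hX.some_mem
  obtain ⟨k, -, hk⟩ := mem_prefMu_rank_iff.1 hY.some_mem
  rcases le_total (r i) (r k) with hik | hki
  · exact ⟨ℓ i, mem_prefMu_rank_iff.2 ⟨i, rfl, hi.union hk hik⟩⟩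
  · exact ⟨ℓ k, mem_prefMu_rank_iff.2 ⟨k, rfl, Set.union_comm X Y ▸ hk.union hi hki⟩⟩

theorem exists_mem_not_mem_prefMu_rank_pair {a : U}
    (ha : a ∈ X \ prefMu ℓ (fun i j => r i < r j) X) :
    ∃ b ∈ X, a ∉ prefMu ℓ (fun i j => r i < r j) {a, b} := by
  by_cases ha1 : a ∈ prefMu ℓ (fun i j => r i < r j) {a}
  · obtain ⟨i, rfl, hi⟩ := mem_prefMu_rank_iff.1 ha1
    obtain ⟨j, hjX, hji⟩ : ∃ j, ℓ j ∈ X ∧ r j < r i := by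
      by_contra! hmin
      exact ha.2 (mem_prefMu_rank_iff.2 ⟨i, rfl, ha.1, hmin⟩)
    refine ⟨ℓ j, hjX, fun h => ?_⟩
    obtain ⟨k, hki, hk⟩ := mem_prefMu_rank_iff.1 h
    exact ((hi.2 k hki).trans (hk.2 j (Or.inr rfl))).not_gt hji
  · exact ⟨a, ha.1, by rwa [Set.pair_eq_singleton]⟩

end Ranked

/-- In ranked preferential structures (relation induced by a rank function into a
linear order), μ satisfies (μ⊆), (μPR), (μ=), (μ='), (μ‖), (μ∪), (μ∪'), (μ∈), (μRatM). -/
theorem ranked_structure_mu_conditions {U Ω I : Type*} [LinearOrder Ω]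
    (ℓ : I → U) (r : I → Ω) :
    let μ : Set U → Set U := prefMu ℓ (fun i j => r i < r j)
    (∀ X : Set U, μ X ⊆ X) ∧
    (∀ X Y : Set U, X ⊆ Y → μ Y ∩ X ⊆ μ X) ∧
    (∀ X Y : Set U, X ⊆ Y → (X ∩ μ Y).Nonempty → μ X = μ Y ∩ X) ∧
    (∀ X Y : Set U, (μ Y ∩ X).Nonempty → μ (Y ∩ X) = μ Y ∩ X) ∧
    (∀ X Y : Set U, μ (X ∪ Y) = μ X ∨ μ (X ∪ Y) = μ Y ∨ μ (X ∪ Y) = μ X ∪ μ Y) ∧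
    (∀ X Y : Set U, (μ Y ∩ (X \ μ X)).Nonempty → μ (X ∪ Y) ∩ Y = ∅) ∧
    (∀ X Y : Set U, (μ Y ∩ (X \ μ X)).Nonempty → μ (X ∪ Y) = μ X) ∧
    (∀ X : Set U, ∀ a ∈ X \ μ X, ∃ b ∈ X, a ∉ μ {a, b}) ∧
    (∀ X Y : Set U, X ⊆ Y → (X ∩ μ Y).Nonempty → μ X ⊆ μ Y ∩ X) := by
  intro μ
  have hsub : ∀ X, μ X ⊆ X := fun _ => prefMu_subset
  have heq : ∀ X Y, X ⊆ Y → (X ∩ μ Y).Nonempty → μ X = μ Y ∩ X :=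
    fun _ _ => prefMu_rank_eq_inter
  have hunion : ∀ X Y, (μ X).Nonempty → (μ Y).Nonempty → (μ (X ∪ Y)).Nonempty :=
    fun _ _ => prefMu_rank_union_nonempty
  exact ⟨hsub, fun _ _ => prefMu_inter_subset, heq, fun _ _ => mu_inter_eq hsub heq,
    mu_union_trichotomy hsub heq hunion, fun _ _ => mu_union_inter_eq_empty heq,
    fun _ _ => mu_union_eq_left hsub heq hunion, fun _ _ => exists_mem_not_mem_prefMu_rank_pair,
    fun X Y hXY h => (heq X Y hXY h).subset⟩
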